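/- For every k ∈ (0,1) and every u > 0, one has √(1−k²sin²u)·(E(u,k) − (1−k²)·F(u,k)) > k²·sin u·cos u. (The function f₃(p) = −dn p·E(p) + p·dn p·(1−k²) + k² sn p·cn p is negative for all p > 0 and k ∈ (0,1), written in the Legendre variable u = am(p,k).) -/

import Mathlib

open Real

/-- Incomplete elliptic integral of the first kind in Legendre form:
`F(u,k) = ∫₀ᵘ dφ/√(1 − k² sin² φ)`. -/
noncomputable def EllF (u k : ℝ) : ℝ :=
  ∫ φ in (0:ℝ)..u, 1 / Real.sqrt (1 - k ^ 2 * Real.sin φ ^ 2)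

/-- Incomplete elliptic integral of the second kind in Legendre form:
`E(u,k) = ∫₀ᵘ √(1 − k² sin² φ) dφ`. -/
noncomputable def EllE (u k : ℝ) : ℝ :=
  ∫ φ in (0:ℝ)..u, Real.sqrt (1 - k ^ 2 * Real.sin φ ^ 2)

/-!
With `Δ(φ) = √(1 − k² sin² φ)`, the function `k² sin φ cos φ / Δ(φ)` is an antiderivative of
`Δ − (1 − k²)/Δ − k²(1 − k²) sin² φ / Δ³`. Integrating over `[0, u]` gives
`E(u,k) − (1 − k²) F(u,k) = k² sin u cos u / Δ(u) + ∫₀ᵘ k²(1 − k²) sin² φ / Δ³ dφ`,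
and the last integrand is nonnegative and positive on `(0, π)`, so the integral is positive
for `u > 0`.
-/

theorem intervalIntegral_pos_of_nonneg_of_pos_on_Ioo {f : ℝ → ℝ} {a b c : ℝ}
    (hf : Continuous f) (hf_nonneg : ∀ x, 0 ≤ f x) (hf_pos : ∀ x ∈ Set.Ioo a c, 0 < f x)
    (hac : a < c) (hab : a < b) : 0 < ∫ x in a..b, f x := by
  have hm : a < min b c := lt_min hab hac
  calc 0 < ∫ x in a..min b c, f x :=
        intervalIntegral.intervalIntegral_pos_of_pos_on (hf.intervalIntegrable _ _)
          (fun x hx => hf_pos x ⟨hx.1, hx.2.trans_le (min_le_right _ _)⟩) hm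
    _ ≤ ∫ x in a..b, f x :=
        intervalIntegral.integral_mono_interval le_rfl hm.le (min_le_left _ _)
          (Filter.Eventually.of_forall hf_nonneg) (hf.intervalIntegrable _ _)

noncomputable def legendreDelta (k φ : ℝ) : ℝ :=
  √(1 - k ^ 2 * sin φ ^ 2)

section LegendreDelta

variable {k : ℝ}

theorem one_sub_sq_mul_sin_sq_pos (hk : k ^ 2 < 1) (φ : ℝ) : 0 < 1 - k ^ 2 * sin φ ^ 2 := by
  nlinarith [sin_sq_le_one φ, sq_nonneg (sin φ)]

theorem legendreDelta_pos (hk : k ^ 2 < 1) (φ : ℝ) : 0 < legendreDelta k φ :=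
  sqrt_pos.mpr (one_sub_sq_mul_sin_sq_pos hk φ)

theorem legendreDelta_sq (hk : k ^ 2 < 1) (φ : ℝ) :
    legendreDelta k φ ^ 2 = 1 - k ^ 2 * sin φ ^ 2 :=
  sq_sqrt (one_sub_sq_mul_sin_sq_pos hk φ).le

theorem continuous_legendreDelta (k : ℝ) : Continuous (legendreDelta k) := by
  unfold legendreDelta
  fun_prop

theorem hasDerivAt_legendreDelta (hk : k ^ 2 < 1) (φ : ℝ) :
    HasDerivAt (legendreDelta k) (-(k ^ 2 * sin φ * cos φ) / legendreDelta k φ) φ := by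
  have hsin_sq : HasDerivAt (fun x => sin x ^ 2) (2 * sin φ * cos φ) φ :=
    ((hasDerivAt_sin φ).pow 2).congr_deriv (by ring)
  have hinner := (hsin_sq.const_mul (k ^ 2)).const_sub 1
  refine (hinner.sqrt (one_sub_sq_mul_sin_sq_pos hk φ).ne').congr_deriv ?_
  unfold legendreDelta
  ring

theorem hasDerivAt_sin_mul_cos_div_legendreDelta (hk : k ^ 2 < 1) (φ : ℝ) :
    HasDerivAt (fun x => k ^ 2 * sin x * cos x / legendreDelta k x)
      (legendreDelta k φ - (1 - k ^ 2) / legendreDelta k φ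
        - k ^ 2 * (1 - k ^ 2) * sin φ ^ 2 / legendreDelta k φ ^ 3) φ := by
  have hnum : HasDerivAt (fun x => k ^ 2 * sin x * cos x)
      (k ^ 2 * (cos φ ^ 2 - sin φ ^ 2)) φ := by
    have h := ((hasDerivAt_sin φ).mul (hasDerivAt_cos φ)).const_mul (k ^ 2)
    simp only [Pi.mul_apply, ← mul_assoc] at h
    exact h.congr_deriv (by ring)
  refine (hnum.fun_div (hasDerivAt_legendreDelta hk φ) (legendreDelta_pos hk φ).ne').congr_deriv ?_
  have hΔ := (legendreDelta_pos hk φ).ne'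
  field_simp
  linear_combination (-legendreDelta k φ ^ 2 - k ^ 2 * sin φ ^ 2) * legendreDelta_sq hk φ
    + k ^ 2 * (legendreDelta k φ ^ 2 + k ^ 2 * sin φ ^ 2) * sin_sq_add_cos_sq φ

theorem continuous_sin_sq_div_legendreDelta_pow_three (hk : k ^ 2 < 1) (c : ℝ) :
    Continuous fun φ => c * sin φ ^ 2 / legendreDelta k φ ^ 3 :=
  (by fun_prop : Continuous fun φ => c * sin φ ^ 2).div ((continuous_legendreDelta k).pow 3)
    fun φ => pow_ne_zero 3 (legendreDelta_pos hk φ).ne'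

theorem integral_sin_sq_div_legendreDelta_pow_three_pos (hk : k ^ 2 < 1) {c u : ℝ}
    (hc : 0 < c) (hu : 0 < u) :
    0 < ∫ φ in (0 : ℝ)..u, c * sin φ ^ 2 / legendreDelta k φ ^ 3 := by
  refine intervalIntegral_pos_of_nonneg_of_pos_on_Ioo
    (continuous_sin_sq_div_legendreDelta_pow_three hk c) (fun φ => ?_) (fun φ hφ => ?_) pi_pos hu
  · have := legendreDelta_pos hk φ
    positivity
  · have := legendreDelta_pos hk φ
    have := sin_pos_of_pos_of_lt_pi hφ.1 hφ.2
    positivity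

theorem ellE_sub_mul_ellF_eq (hk : k ^ 2 < 1) (u : ℝ) :
    EllE u k - (1 - k ^ 2) * EllF u k = k ^ 2 * sin u * cos u / legendreDelta k u
      + ∫ φ in (0 : ℝ)..u, k ^ 2 * (1 - k ^ 2) * sin φ ^ 2 / legendreDelta k φ ^ 3 := by
  have hE : EllE u k = ∫ φ in (0 : ℝ)..u, legendreDelta k φ := rfl
  have hF : EllF u k = ∫ φ in (0 : ℝ)..u, 1 / legendreDelta k φ := rfl
  have hΔ : IntervalIntegrable (legendreDelta k) MeasureTheory.volume 0 u :=
    (continuous_legendreDelta k).intervalIntegrable _ _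
  have hΔinv : IntervalIntegrable (fun φ => 1 / legendreDelta k φ) MeasureTheory.volume 0 u :=
    (continuous_const.div (continuous_legendreDelta k)
      fun φ => (legendreDelta_pos hk φ).ne').intervalIntegrable _ _
  have hrest := (continuous_sin_sq_div_legendreDelta_pow_three hk (k ^ 2 * (1 - k ^ 2)))
    |>.intervalIntegrable (μ := MeasureTheory.volume) 0 u
  have hderiv (φ : ℝ) : HasDerivAt (fun x => k ^ 2 * sin x * cos x / legendreDelta k x)
      (legendreDelta k φ - (1 - k ^ 2) * (1 / legendreDelta k φ)
        - k ^ 2 * (1 - k ^ 2) * sin φ ^ 2 / legendreDelta k φ ^ 3) φ := by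
    rw [mul_one_div]
    exact hasDerivAt_sin_mul_cos_div_legendreDelta hk φ
  have hftc := intervalIntegral.integral_eq_sub_of_hasDerivAt (fun φ _ => hderiv φ)
    ((hΔ.sub (hΔinv.const_mul _)).sub hrest)
  rw [intervalIntegral.integral_sub (hΔ.sub (hΔinv.const_mul _)) hrest,
    intervalIntegral.integral_sub hΔ (hΔinv.const_mul _), intervalIntegral.integral_const_mul,
    sin_zero, mul_zero, zero_mul, zero_div, sub_zero] at hftc
  rw [hE, hF]
  linarith

end LegendreDelta

/-- For every `k ∈ (0,1)` and every `u > 0`: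
`√(1 − k² sin² u) · (E(u,k) − (1 − k²) F(u,k)) > k² sin u cos u`
(negativity of the function `f₃` of the paper, in the Legendre variable). -/
theorem f3_negative (k u : ℝ) (hk : k ∈ Set.Ioo (0:ℝ) 1) (hu : 0 < u) :
    Real.sqrt (1 - k ^ 2 * Real.sin u ^ 2) * (EllE u k - (1 - k ^ 2) * EllF u k) >
      k ^ 2 * Real.sin u * Real.cos u := by
  obtain ⟨hk0, hk1⟩ := hk
  have hk2 : k ^ 2 < 1 := by nlinarith
  have hc : 0 < k ^ 2 * (1 - k ^ 2) := mul_pos (by positivity) (by linarith)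
  have hΔ := legendreDelta_pos hk2 u
  change legendreDelta k u * _ > _
  rw [ellE_sub_mul_ellF_eq hk2 u, mul_add, mul_div_cancel₀ _ hΔ.ne']
  linarith [mul_pos hΔ (integral_sin_sq_div_legendreDelta_pow_three_pos hk2 hc hu)]
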